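/- G_μ is exactly the subgroup of GL(2,ℤ) generated by the two matrices f₁ = [[0,1],[1,0]] and f₂ = [[−1,0],[2,1]]; moreover f₁² = I and f₂² = I. -/

import Mathlib

/-!
`G_μ` is the stabilizer of the row vector `(1, 1)` under `v ↦ v g`, hence a subgroup; it contains
`f₁` and `f₂`. Conversely, an element of `G_μ` has the form `[[a, b], [1 - a, 1 - b]]` with
determinant `a - b = ±1`. Since `(f₁ f₂)^k = [[k + 1, k], [-k, 1 - k]]` and right multiplication by
`f₁` swaps the columns, such a matrix is `(f₁ f₂)^b` or `(f₁ f₂)^a f₁`.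
-/

open Matrix

def memGmu (g : Matrix.GeneralLinearGroup (Fin 2) ℤ) : Prop :=
  (↑g : Matrix (Fin 2) (Fin 2) ℤ) 0 0 + (↑g : Matrix (Fin 2) (Fin 2) ℤ) 1 0 = 1 ∧
  (↑g : Matrix (Fin 2) (Fin 2) ℤ) 0 1 + (↑g : Matrix (Fin 2) (Fin 2) ℤ) 1 1 = 1

def f1U : Matrix.GeneralLinearGroup (Fin 2) ℤ :=
  ⟨!![0, 1; 1, 0], !![0, 1; 1, 0], by decide, by decide⟩

def f2U : Matrix.GeneralLinearGroup (Fin 2) ℤ :=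
  ⟨!![-1, 0; 2, 1], !![-1, 0; 2, 1], by decide, by decide⟩

namespace Matrix.GeneralLinearGroup

variable {n R : Type*} [Fintype n] [DecidableEq n] [CommRing R]

def vecMulStabilizer (v : n → R) : Subgroup (GL n R) where
  carrier := {g | v ᵥ* (g : Matrix n n R) = v}
  one_mem' := vecMul_one v
  mul_mem' {a b} ha hb := by
    simp only [Set.mem_ofPred_eq, Units.val_mul, ← vecMul_vecMul] at ha hb ⊢
    rw [ha, hb]
  inv_mem' {g} hg := by
    simp only [Set.mem_ofPred_eq] at hg ⊢
    conv_lhs => rw [← hg]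
    rw [vecMul_vecMul, ← Units.val_mul, mul_inv_cancel, Units.val_one, vecMul_one]

theorem mem_vecMulStabilizer {v : n → R} {g : GL n R} :
    g ∈ vecMulStabilizer v ↔ v ᵥ* (g : Matrix n n R) = v :=
  Iff.rfl

end Matrix.GeneralLinearGroup

open Matrix.GeneralLinearGroup

theorem memGmu_iff_mem_vecMulStabilizer (g : GL (Fin 2) ℤ) :
    memGmu g ↔ g ∈ vecMulStabilizer ![1, 1] := by
  simp [mem_vecMulStabilizer, memGmu, funext_iff, Fin.forall_fin_two, vecMul, dotProduct,
    Fin.sum_univ_two]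

theorem exists_coe_eq_of_memGmu {g : GL (Fin 2) ℤ} (hg : memGmu g) :
    ∃ a b : ℤ, (g : Matrix (Fin 2) (Fin 2) ℤ) = !![a, b; 1 - a, 1 - b] := by
  obtain ⟨h0, h1⟩ := hg
  refine ⟨(g : Matrix (Fin 2) (Fin 2) ℤ) 0 0, (g : Matrix (Fin 2) (Fin 2) ℤ) 0 1, ?_⟩
  ext i j; fin_cases i <;> fin_cases j <;> simp <;> omega

theorem coe_f1U_mul_f2U_zpow (k : ℤ) :
    (((f1U * f2U) ^ k : GL (Fin 2) ℤ) : Matrix (Fin 2) (Fin 2) ℤ) = !![k + 1, k; -k, 1 - k] := by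
  have ht : ((f1U * f2U : GL (Fin 2) ℤ) : Matrix (Fin 2) (Fin 2) ℤ) = !![2, 1; -1, 0] := by
    decide
  have ht' : (((f1U * f2U)⁻¹ : GL (Fin 2) ℤ) : Matrix (Fin 2) (Fin 2) ℤ) = !![0, -1; 1, 2] := by
    decide
  induction k using Int.induction_on with
  | zero => simp [one_fin_two]
  | succ k ih =>
    rw [_root_.zpow_add_one, Units.val_mul, ih, ht]
    ext i j; fin_cases i <;> fin_cases j <;> simp [mul_apply, Fin.sum_univ_two] <;> ring
  | pred k ih =>
    rw [_root_.zpow_sub_one, Units.val_mul, ih, ht']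
    ext i j; fin_cases i <;> fin_cases j <;> simp [mul_apply, Fin.sum_univ_two] <;> ring

theorem coe_f1U_mul_f2U_zpow_mul_f1U (k : ℤ) :
    (((f1U * f2U) ^ k * f1U : GL (Fin 2) ℤ) : Matrix (Fin 2) (Fin 2) ℤ) =
      !![k, k + 1; 1 - k, -k] := by
  rw [Units.val_mul, coe_f1U_mul_f2U_zpow]
  ext i j; fin_cases i <;> fin_cases j <;> simp [f1U, mul_apply, Fin.sum_univ_two]

theorem vecMulStabilizer_le_closure_f1U_f2U :
    vecMulStabilizer ![1, 1] ≤ Subgroup.closure {f1U, f2U} := by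
  intro g hg
  obtain ⟨a, b, hA⟩ := exists_coe_eq_of_memGmu ((memGmu_iff_mem_vecMulStabilizer g).mpr hg)
  have hf1 : f1U ∈ Subgroup.closure {f1U, f2U} := Subgroup.subset_closure (by simp)
  have ht : f1U * f2U ∈ Subgroup.closure {f1U, f2U} :=
    mul_mem hf1 (Subgroup.subset_closure (by simp))
  have hdet : IsUnit (a - b) := by
    have hunit := (isUnit_iff_isUnit_det _).mp g.isUnit
    rwa [hA, det_fin_two_of, show a * (1 - b) - b * (1 - a) = a - b by ring] at hunit
  rcases Int.isUnit_iff.mp hdet with hab | hab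
  · have : g = (f1U * f2U) ^ b := Units.ext <| by
      rw [hA, coe_f1U_mul_f2U_zpow]; congr <;> omega
    exact this ▸ zpow_mem ht b
  · have : g = (f1U * f2U) ^ a * f1U := Units.ext <| by
      rw [hA, coe_f1U_mul_f2U_zpow_mul_f1U]; congr <;> omega
    exact this ▸ mul_mem (zpow_mem ht a) hf1

theorem closure_f1U_f2U_eq_vecMulStabilizer :
    Subgroup.closure {f1U, f2U} = vecMulStabilizer ![1, 1] := by
  refine le_antisymm ?_ vecMulStabilizer_le_closure_f1U_f2U
  rw [Subgroup.closure_le, Set.insert_subset_iff, Set.singleton_subset_iff]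
  exact ⟨mem_vecMulStabilizer.mpr (by decide), mem_vecMulStabilizer.mpr (by decide)⟩

/-- `G_μ` is exactly the subgroup of `GL(2,ℤ)` generated by
`f₁ = [[0,1],[1,0]]` and `f₂ = [[−1,0],[2,1]]`; moreover `f₁² = I` and `f₂² = I`. -/
theorem Gmu_eq_closure_f1_f2 :
    f1U ^ 2 = 1 ∧ f2U ^ 2 = 1 ∧
    (∀ g : Matrix.GeneralLinearGroup (Fin 2) ℤ,
      g ∈ Subgroup.closure ({f1U, f2U} : Set (Matrix.GeneralLinearGroup (Fin 2) ℤ)) ↔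
        memGmu g) := by
  refine ⟨Units.ext (by decide), Units.ext (by decide), fun g => ?_⟩
  rw [closure_f1U_f2U_eq_vecMulStabilizer, memGmu_iff_mem_vecMulStabilizer]
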